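/- Let A ∈ ℝ^{m×n}, let S = {U₀,…,U_{s−1}} be a partition of {1,…,m} into s blocks such that σ_max(A_{U,:})² ≤ β_A for every U ∈ S, and assume σ_min(A) > 0. If one step of the block Kaczmarz method picks U uniformly at random from S and sets Y⁺ = Y + A_{U,:}†(F_{U,:} − A_{U,:} Y), where F = A Y* and every column of Y − Y* lies in the column space of Aᵀ, then E‖Y⁺ − Y*‖_F² ≤ (1 − σ_min(A)²/(s β_A)) ‖Y − Y*‖_F². -/

import Mathlib

/-! The step on block `U` maps the error `E = Y - Y*` to `(I - Q_U) E`, where `Q_U = A_U† A_U` is an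
orthogonal projection, so `‖E⁺‖² = ‖E‖² - ‖Q_U E‖²`. Since `A_U Q_U = A_U`, paving gives
`‖A_U E‖² ≤ β ‖Q_U E‖²`, and summing over the partition,
`σ_min² ‖E‖² ≤ ‖A E‖² = ∑_U ‖A_U E‖² ≤ β ∑_U ‖Q_U E‖²`. Averaging the first identity over `U` then
gives the contraction. -/

open Matrix Finset Filter

/-- Squared Frobenius norm of a real matrix. -/
noncomputable def frobSq {α β : Type*} [Fintype α] [Fintype β] (M : Matrix α β ℝ) : ℝ :=
  ∑ i, ∑ j, (M i j) ^ 2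

/-- Square of the smallest singular value of a real matrix. -/
noncomputable def sigMinSq {m n : ℕ} (A : Matrix (Fin m) (Fin n) ℝ) : ℝ :=
  sInf {c : ℝ | ∃ v : Fin n → ℝ, (∑ j, (v j) ^ 2) = 1 ∧ c = ∑ i, (A.mulVec v i) ^ 2}

/-- Square of the largest singular value of a real matrix. -/
noncomputable def sigMaxSq {m n : ℕ} (A : Matrix (Fin m) (Fin n) ℝ) : ℝ :=
  sSup {c : ℝ | ∃ v : Fin n → ℝ, (∑ j, (v j) ^ 2) = 1 ∧ c = ∑ i, (A.mulVec v i) ^ 2}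

/-- `P` is the Moore–Penrose pseudoinverse of `M` (the four Penrose conditions). -/
def IsMPInv {α β : Type*} [Fintype α] [Fintype β] (M : Matrix α β ℝ) (P : Matrix β α ℝ) : Prop :=
  M * P * M = M ∧ P * M * P = P ∧ (M * P)ᵀ = M * P ∧ (P * M)ᵀ = P * M

/-- Row submatrix `A_{U,:}`. -/
def rowBlock {m n : ℕ} (A : Matrix (Fin m) (Fin n) ℝ) (U : Finset (Fin m)) :
    Matrix {i // i ∈ U} (Fin n) ℝ := A.submatrix (fun i => (i : Fin m)) id

/-- Column submatrix `B_{:,V}`. -/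
def colBlock {p q : ℕ} (B : Matrix (Fin p) (Fin q) ℝ) (V : Finset (Fin q)) :
    Matrix (Fin p) {j // j ∈ V} ℝ := B.submatrix id (fun j => (j : Fin q))

section FrobeniusNorm

variable {α β γ : Type*} [Fintype α] [Fintype β] [Fintype γ]

lemma frobSq_nonneg (M : Matrix α β ℝ) : 0 ≤ frobSq M := by
  unfold frobSq; positivity

lemma frobSq_eq_trace (M : Matrix α β ℝ) : frobSq M = trace (Mᵀ * M) := by
  simp only [frobSq, trace, Matrix.diag, mul_apply, transpose_apply, sq]
  exact Finset.sum_comm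

lemma frobSq_eq_sum_col (M : Matrix α β ℝ) : frobSq M = ∑ j, ∑ i, (M i j) ^ 2 :=
  Finset.sum_comm

lemma frobSq_sub_mul_of_isProj (Q : Matrix α α ℝ) (hsymm : Qᵀ = Q)
    (hidem : Q * Q = Q) (E : Matrix α β ℝ) :
    frobSq (E - Q * E) = frobSq E - frobSq (Q * E) := by
  have hQQ : (Q * E)ᵀ * (Q * E) = Eᵀ * (Q * E) := by
    rw [transpose_mul, hsymm, Matrix.mul_assoc, ← Matrix.mul_assoc Q Q E, hidem]
  have hQ : (Q * E)ᵀ * E = Eᵀ * (Q * E) := by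
    rw [transpose_mul, hsymm, Matrix.mul_assoc]
  rw [frobSq_eq_trace, frobSq_eq_trace, frobSq_eq_trace, transpose_sub, Matrix.sub_mul,
    Matrix.mul_sub, Matrix.mul_sub, hQQ, hQ, sub_self, sub_zero, trace_sub]

lemma frobSq_mul_le_of_forall_mulVec {M : Matrix α β ℝ} {c : ℝ}
    (h : ∀ v : β → ℝ, ∑ i, (M *ᵥ v) i ^ 2 ≤ c * ∑ j, v j ^ 2) (X : Matrix β γ ℝ) :
    frobSq (M * X) ≤ c * frobSq X := by
  rw [frobSq_eq_sum_col, frobSq_eq_sum_col, Finset.mul_sum]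
  exact Finset.sum_le_sum fun j _ => h (fun r => X r j)

end FrobeniusNorm

section SingularValues

variable {m n : ℕ}

lemma sigMinSq_nonneg (A : Matrix (Fin m) (Fin n) ℝ) : 0 ≤ sigMinSq A :=
  Real.sInf_nonneg fun _ ⟨_, _, hc⟩ => hc ▸ by positivity

lemma sum_sq_smul {ι : Type*} [Fintype ι] (a : ℝ) (v : ι → ℝ) :
    ∑ i, (a • v) i ^ 2 = a ^ 2 * ∑ i, v i ^ 2 := by
  simp only [Pi.smul_apply, smul_eq_mul, mul_pow, Finset.mul_sum]

lemma sigMinSq_mul_le (A : Matrix (Fin m) (Fin n) ℝ) (v : Fin n → ℝ) :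
    sigMinSq A * ∑ j, v j ^ 2 ≤ ∑ i, (A *ᵥ v) i ^ 2 := by
  set c := ∑ j, v j ^ 2
  rcases (show 0 ≤ c by positivity).eq_or_lt with hc | hc
  · rw [← hc, mul_zero]; positivity
  have hunit : ∑ j, ((√c)⁻¹ • v) j ^ 2 = 1 := by
    rw [sum_sq_smul, inv_pow, Real.sq_sqrt hc.le, inv_mul_cancel₀ hc.ne']
  have hle : sigMinSq A ≤ ∑ i, (A *ᵥ ((√c)⁻¹ • v)) i ^ 2 :=
    csInf_le ⟨0, fun _ ⟨_, _, hc⟩ => hc ▸ by positivity⟩ ⟨_, hunit, rfl⟩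
  rwa [mulVec_smul, sum_sq_smul, inv_pow, Real.sq_sqrt hc.le, inv_mul_eq_div,
    le_div_iff₀ hc] at hle

lemma sigMinSq_mul_frobSq_le {q : ℕ} (A : Matrix (Fin m) (Fin n) ℝ)
    (E : Matrix (Fin n) (Fin q) ℝ) : sigMinSq A * frobSq E ≤ frobSq (A * E) := by
  rw [frobSq_eq_sum_col, frobSq_eq_sum_col, Finset.mul_sum]
  exact Finset.sum_le_sum fun j _ => sigMinSq_mul_le A (fun r => E r j)

end SingularValues

lemma sum_sum_subtype_eq_sum_of_partition {ι α M : Type*} [Fintype ι] [Fintype α]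
    [DecidableEq α] [AddCommMonoid M] (S : ι → Finset α)
    (hdisj : ∀ k l, k ≠ l → Disjoint (S k) (S l)) (hcover : ∀ i, ∃ k, i ∈ S k) (g : α → M) :
    ∑ k, ∑ i : S k, g i = ∑ i, g i := by
  simp_rw [Finset.sum_coe_sort]
  rw [← Finset.sum_biUnion fun k _ l _ hkl => hdisj k l hkl]
  congr 1
  ext i
  simpa using hcover i

lemma rowBlock_mul {m n q : ℕ} (A : Matrix (Fin m) (Fin n) ℝ) (B : Matrix (Fin n) (Fin q) ℝ)
    (U : Finset (Fin m)) : rowBlock (A * B) U = rowBlock A U * B :=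
  rfl

lemma sum_frobSq_rowBlock {m n s : ℕ} (A : Matrix (Fin m) (Fin n) ℝ)
    (S : Fin s → Finset (Fin m)) (hdisj : ∀ k l, k ≠ l → Disjoint (S k) (S l))
    (hcover : ∀ i, ∃ k, i ∈ S k) : ∑ k, frobSq (rowBlock A (S k)) = frobSq A :=
  sum_sum_subtype_eq_sum_of_partition S hdisj hcover fun i => ∑ j, A i j ^ 2

namespace IsMPInv

variable {α β γ : Type*} [Fintype α] [Fintype β] {M : Matrix α β ℝ}
  {P : Matrix β α ℝ}

lemma transpose_mul_self (h : IsMPInv M P) : (P * M)ᵀ = P * M := h.2.2.2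

lemma mul_self_idem (h : IsMPInv M P) : P * M * (P * M) = P * M := by
  rw [← Matrix.mul_assoc, h.2.1]

lemma mul_mul_self_mul (h : IsMPInv M P) (E : Matrix β γ ℝ) : M * (P * M * E) = M * E := by
  rw [← Matrix.mul_assoc, ← Matrix.mul_assoc, h.1]

lemma frobSq_mul_le [Fintype γ] {c : ℝ} (h : IsMPInv M P)
    (hM : ∀ v : β → ℝ, ∑ i, (M *ᵥ v) i ^ 2 ≤ c * ∑ j, v j ^ 2) (E : Matrix β γ ℝ) :
    frobSq (M * E) ≤ c * frobSq (P * M * E) :=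
  h.mul_mul_self_mul E ▸ frobSq_mul_le_of_forall_mulVec hM _

end IsMPInv

lemma add_mul_sub_sub_eq {α β γ : Type*} [Fintype α] [Fintype β] (M : Matrix α β ℝ)
    (P : Matrix β α ℝ) (Y Ystar : Matrix β γ ℝ) :
    Y + P * (M * Ystar - M * Y) - Ystar = (Y - Ystar) - P * M * (Y - Ystar) := by
  simp only [Matrix.mul_sub, Matrix.mul_assoc]
  abel

lemma one_div_mul_sub_le_one_sub_div_mul (s : ℕ) {σ β e T : ℝ} (hσ : 0 ≤ σ) (he : 0 ≤ e)
    (hT : 0 ≤ T) (h : σ * e ≤ β * T) :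
    1 / (s : ℝ) * (s * e - T) ≤ (1 - σ / (s * β)) * e := by
  rcases s.eq_zero_or_pos with rfl | hs
  · simpa using he
  have hs' : (0 : ℝ) < s := by exact_mod_cast hs
  have hdiv : σ / (s * β) * e ≤ T / s := by
    rcases lt_or_ge 0 β with hβ | hβ
    · rw [div_mul_eq_mul_div, div_le_div_iff₀ (by positivity) hs']
      nlinarith
    · have : σ * e = 0 := le_antisymm (h.trans (mul_nonpos_of_nonpos_of_nonneg hβ hT))
        (by positivity)
      rw [div_mul_eq_mul_div, this, zero_div]
      positivity
  calc 1 / (s : ℝ) * (s * e - T) = e - T / s := by field_simp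
    _ ≤ e - σ / (s * β) * e := by linarith
    _ = (1 - σ / (s * β)) * e := by ring

theorem stmt12_general (m n q s : ℕ) (A : Matrix (Fin m) (Fin n) ℝ)
    (S : Fin s → Finset (Fin m))
    (hdisj : ∀ k l, k ≠ l → Disjoint (S k) (S l))
    (hcover : ∀ i, ∃ k, i ∈ S k)
    (βA : ℝ)
    (hpav : ∀ k (v : Fin n → ℝ),
      (∑ i, ((rowBlock A (S k)).mulVec v i) ^ 2) ≤ βA * ∑ j, (v j) ^ 2)
    (Y Ystar : Matrix (Fin n) (Fin q) ℝ) (F : Matrix (Fin m) (Fin q) ℝ) (hF : F = A * Ystar)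
    (P : ∀ k : Fin s, Matrix (Fin n) {i // i ∈ S k} ℝ)
    (hP : ∀ k, IsMPInv (rowBlock A (S k)) (P k)) :
    (1 / (s : ℝ)) * ∑ k,
        frobSq (Y + P k * (rowBlock F (S k) - rowBlock A (S k) * Y) - Ystar)
      ≤ (1 - sigMinSq A / (s * βA)) * frobSq (Y - Ystar) := by
  set E := Y - Ystar
  set T := ∑ k, frobSq (P k * rowBlock A (S k) * E)
  have hstep : ∀ k, frobSq (Y + P k * (rowBlock F (S k) - rowBlock A (S k) * Y) - Ystar)
      = frobSq E - frobSq (P k * rowBlock A (S k) * E) := fun k => by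
    rw [hF, rowBlock_mul, add_mul_sub_sub_eq]
    exact frobSq_sub_mul_of_isProj _ (hP k).transpose_mul_self (hP k).mul_self_idem E
  have hkey : sigMinSq A * frobSq E ≤ βA * T :=
    calc sigMinSq A * frobSq E ≤ frobSq (A * E) := sigMinSq_mul_frobSq_le A E
      _ = ∑ k, frobSq (rowBlock A (S k) * E) := by
        simp_rw [← rowBlock_mul, sum_frobSq_rowBlock _ S hdisj hcover]
      _ ≤ ∑ k, βA * frobSq (P k * rowBlock A (S k) * E) :=
        Finset.sum_le_sum fun k _ => (hP k).frobSq_mul_le (hpav k) E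
      _ = βA * T := (Finset.mul_sum ..).symm
  rw [Finset.sum_congr rfl fun k _ => hstep k, Finset.sum_sub_distrib, Finset.sum_const,
    Finset.card_univ, Fintype.card_fin, nsmul_eq_mul]
  exact one_div_mul_sub_le_one_sub_div_mul s (sigMinSq_nonneg A) (frobSq_nonneg E)
    (Finset.sum_nonneg fun k _ => frobSq_nonneg _) hkey

theorem stmt12 (m n q s : ℕ) (hs : 0 < s) (A : Matrix (Fin m) (Fin n) ℝ)
    (S : Fin s → Finset (Fin m))
    (hdisj : ∀ k l, k ≠ l → Disjoint (S k) (S l))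
    (hcover : ∀ i, ∃ k, i ∈ S k)
    (βA : ℝ)
    (hpav : ∀ k (v : Fin n → ℝ),
      (∑ i, ((rowBlock A (S k)).mulVec v i) ^ 2) ≤ βA * ∑ j, (v j) ^ 2)
    (hσ : 0 < sigMinSq A)
    (Y Ystar : Matrix (Fin n) (Fin q) ℝ) (F : Matrix (Fin m) (Fin q) ℝ) (hF : F = A * Ystar)
    (Z : Matrix (Fin m) (Fin q) ℝ) (hYZ : Y - Ystar = Aᵀ * Z)
    (P : ∀ k : Fin s, Matrix (Fin n) {i // i ∈ S k} ℝ)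
    (hP : ∀ k, IsMPInv (rowBlock A (S k)) (P k)) :
    (1 / (s : ℝ)) * ∑ k,
        frobSq (Y + P k * (rowBlock F (S k) - rowBlock A (S k) * Y) - Ystar)
      ≤ (1 - sigMinSq A / (s * βA)) * frobSq (Y - Ystar) :=
  stmt12_general m n q s A S hdisj hcover βA hpav Y Ystar F hF P hP
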